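/- arXiv:1809.04658 — 5 statements merged into one kernel-verified Lean document; each statement's English description precedes it below -/
import Mathlib

section
/- A topological space X has the property that every subset is closed or dense if and only if every subset of every proper closed subset of X is closed. -/
open Set Filter Topology

theorem IsClosed.eq_univ_of_dense_subset {X : Type*} [TopologicalSpace X] {A B : Set X}
    (hA : IsClosed A) (hB : Dense B) (hBA : B ⊆ A) : A = univ :=
  hA.closure_eq ▸ (hB.mono hBA).closure_eq

/-- A topological space has the property that every subset is closed or dense iff every
subset of every proper closed subset is closed. -/
theorem closed_or_dense_iff_subsets_of_proper_closed_closed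
    {X : Type*} [TopologicalSpace X] :
    (∀ A : Set X, IsClosed A ∨ Dense A) ↔
    (∀ A : Set X, IsClosed A → A ≠ Set.univ → ∀ B ⊆ A, IsClosed B) := by
  constructor
  · intro h A hA hA_ne B hBA
    exact (h B).resolve_right fun hB => hA_ne (hA.eq_univ_of_dense_subset hB hBA)
  · intro h A
    by_cases hA : Dense A
    · exact Or.inr hA
    · exact Or.inl <|
        h (closure A) isClosed_closure (mt dense_iff_closure_eq.mpr hA) A subset_closure
end

section
/- The series topology ℕ_{aₙ} is disconnected if and only if ∑_{n∈ℕ} aₙ converges; equivalently, ℕ_{aₙ} is connected if and only if ∑ aₙ diverges. -/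
/-!
If `∑ aₙ` converges then, summability in `ℝ` being absolute, so does its restriction to every
`A ⊆ ℕ`; so every set is closed and `ℕ_{aₙ}` is discrete, hence disconnected. If it diverges, a
proper nonempty clopen `A` would make both `A` and `Aᶜ` closed and different from `ℕ`, so the sums
over `A` and over `Aᶜ` would both converge, and with them `∑ aₙ`.
-/

open Set Filter Topology

/-- The topology on `ℕ` whose closed sets are `{A | ∑_{n ∈ A} a n < ∞} ∪ {univ}`. -/
noncomputable def seriesTopology (a : ℕ → ℝ) : TopologicalSpace ℕ :=
  TopologicalSpace.ofClosed {A : Set ℕ | Summable (A.indicator a) ∨ A = Set.univ}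
    (Or.inl (by rw [Set.indicator_empty]; exact summable_zero))
    (fun 𝒮 h𝒮 => by
      by_cases h : ∃ A ∈ 𝒮, Summable (A.indicator a)
      · obtain ⟨A, hA, hsum⟩ := h
        left
        have hsub : ⋂₀ 𝒮 ⊆ A := Set.sInter_subset_of_mem hA
        have h2 := hsum.indicator (⋂₀ 𝒮)
        rwa [Set.indicator_indicator, Set.inter_eq_self_of_subset_left hsub] at h2
      · right
        push_neg at h
        rw [Set.sInter_eq_univ]
        intro A hA
        rcases h𝒮 hA with hs | h1
        · exact absurd hs (h A hA)
        · exact h1)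
    (fun A hA B hB => by
      rcases hA with hA | rfl
      · rcases hB with hB | rfl
        · left
          have hBA : Summable ((B \ A).indicator a) := by
            have h2 := hB.indicator (B \ A)
            rwa [Set.indicator_indicator,
              Set.inter_eq_self_of_subset_left Set.diff_subset] at h2
          have hsum := hA.add hBA
          have heq : (A ∪ B).indicator a = A.indicator a + (B \ A).indicator a := by
            rw [← Set.union_diff_self,
              Set.indicator_union_of_disjoint disjoint_sdiff_self_right]; rfl
          rw [heq, Pi.add_def]; exact hsum
        · right; rw [Set.union_univ]
      · right; rw [Set.univ_union])

section SeriesTopology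

variable {a : ℕ → ℝ}

theorem isClosed_seriesTopology_iff {s : Set ℕ} :
    IsClosed[seriesTopology a] s ↔ Summable (s.indicator a) ∨ s = univ := by
  rw [← @isOpen_compl_iff _ _ (seriesTopology a)]
  change sᶜᶜ ∈ {A : Set ℕ | Summable (A.indicator a) ∨ A = univ} ↔ _
  rw [compl_compl]
  rfl

theorem summable_indicator_of_isClosed_seriesTopology {s : Set ℕ}
    (hs : IsClosed[seriesTopology a] s) (hs_ne : s ≠ univ) : Summable (s.indicator a) :=
  (isClosed_seriesTopology_iff.1 hs).resolve_right hs_ne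

theorem discreteTopology_seriesTopology (ha : Summable a) :
    @DiscreteTopology ℕ (seriesTopology a) := by
  let _ := seriesTopology a
  refine discreteTopology_iff_forall_isClosed.2 fun s => ?_
  exact isClosed_seriesTopology_iff.2 (Or.inl (ha.indicator s))

theorem connectedSpace_seriesTopology_of_not_summable (ha : ¬ Summable a) :
    @ConnectedSpace ℕ (seriesTopology a) := by
  let _ := seriesTopology a
  refine connectedSpace_iff_clopen.2 ⟨⟨0⟩, fun s hs => ?_⟩
  by_contra! hs_ne
  obtain ⟨hs_nonempty, hs_ne_univ⟩ := hs_ne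
  have h_sum := (summable_indicator_of_isClosed_seriesTopology hs.1 hs_ne_univ).add
    (summable_indicator_of_isClosed_seriesTopology hs.2.isClosed_compl (compl_ne_univ.2 hs_nonempty))
  exact ha (s.indicator_self_add_compl a ▸ h_sum)

theorem connectedSpace_seriesTopology_iff :
    @ConnectedSpace ℕ (seriesTopology a) ↔ ¬ Summable a := by
  refine ⟨fun hc ha => ?_, connectedSpace_seriesTopology_of_not_summable⟩
  let _ := seriesTopology a
  have := discreteTopology_seriesTopology ha
  exact not_subsingleton ℕ PreconnectedSpace.trivial_of_discrete

end SeriesTopology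

theorem disconnected_iff_summable_general (a : ℕ → ℝ) :
    (¬ @ConnectedSpace ℕ (seriesTopology a) ↔ Summable a) ∧
    (@ConnectedSpace ℕ (seriesTopology a) ↔ ¬ Summable a) :=
  ⟨connectedSpace_seriesTopology_iff.not_left, connectedSpace_seriesTopology_iff⟩

/-- `ℕ_{aₙ}` is disconnected iff `∑ aₙ` converges; equivalently, it is connected iff
`∑ aₙ` diverges. -/
theorem disconnected_iff_summable (a : ℕ → ℝ) (ha : ∀ n, 0 < a n) :
    (¬ @ConnectedSpace ℕ (seriesTopology a) ↔ Summable a) ∧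
    (@ConnectedSpace ℕ (seriesTopology a) ↔ ¬ Summable a) :=
  disconnected_iff_summable_general a
end

section
/- The series topology ℕ_{aₙ} is compact if and only if inf{aₙ : n ∈ ℕ} > 0. -/
open Set Filter Topology

/-!
If `δ = inf aₙ > 0`, a set with summable indicator has every term at least `δ`, so it is finite:
the topology is coarser than the cofinite topology, hence compact. If `inf aₙ = 0`, positivity
forces `aₙ < 2⁻ᵏ` for infinitely many `n`, for every `k`, so there are `n₀ < n₁ < ⋯` with
`a_{nₖ} < 2⁻ᵏ`. Then `S = {nₖ}` has summable indicator, and so has each of its subsets: `S` is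
an infinite closed set all of whose subsets are closed, which is impossible in a compact space.
-/

theorem Summable.indicator_of_subset {ι E : Type*} [NormedAddCommGroup E] [CompleteSpace E]
    {f : ι → E} {s t : Set ι} (hs : Summable (s.indicator f)) (hts : t ⊆ s) :
    Summable (t.indicator f) := by
  simpa only [indicator_indicator, inter_eq_self_of_subset_left hts] using hs.indicator t

theorem Set.Finite.of_summable_indicator_of_le {ι : Type*} {a : ι → ℝ} {s : Set ι} {δ : ℝ}
    (hδ : 0 < δ) (ha : ∀ i, δ ≤ a i) (hs : Summable (s.indicator a)) : s.Finite :=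
  (eventually_cofinite.1 <| hs.tendsto_cofinite_zero.eventually (gt_mem_nhds hδ)).subset
    fun i hi => by simpa [indicator_of_mem hi] using ha i

theorem infinite_setOf_lt_of_iInf_le_zero {ι : Type*} [Nonempty ι] {a : ι → ℝ}
    (ha : ∀ i, 0 < a i) (h : ⨅ i, a i ≤ 0) {ε : ℝ} (hε : 0 < ε) : {i | a i < ε}.Infinite := by
  intro hfin
  obtain ⟨δ, ⟨hδε, hδa⟩, hδ⟩ : ∃ δ, (δ ≤ ε ∧ ∀ i ∈ {i | a i < ε}, δ ≤ a i) ∧ 0 < δ :=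
    (((eventually_le_nhds hε).and (hfin.eventually_all.2 fun i _ => eventually_le_nhds (ha i))
      |>.filter_mono nhdsWithin_le_nhds).and self_mem_nhdsWithin : ∀ᶠ δ in 𝓝[>] (0 : ℝ), _).exists
  refine (h.trans_lt hδ).not_ge (le_ciInf fun i => ?_)
  by_cases hi : a i < ε
  exacts [hδa i hi, hδε.trans (not_lt.1 hi)]

theorem exists_infinite_summable_indicator_of_iInf_le_zero {a : ℕ → ℝ} (ha : ∀ n, 0 < a n)
    (h : ⨅ n, a n ≤ 0) : ∃ s : Set ℕ, s.Infinite ∧ Summable (s.indicator a) := by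
  obtain ⟨φ, hφ, hφa⟩ := extraction_forall_of_frequently fun k =>
    Nat.frequently_atTop_iff_infinite.2 <|
      infinite_setOf_lt_of_iInf_le_zero ha h (pow_pos one_half_pos k)
  have hsum : Summable (a ∘ φ) :=
    summable_geometric_two.of_nonneg_of_le (fun k => (ha _).le) fun k => (hφa k).le
  refine ⟨range φ, infinite_range_of_injective hφ.injective,
    (hφ.injective.summable_iff fun n hn => indicator_of_notMem hn a).1 (hsum.congr fun k => ?_)⟩
  simp

theorem compactSpace_of_forall_isClosed_finite {X : Type*} [TopologicalSpace X]
    (h : ∀ s : Set X, IsClosed s → s ≠ univ → s.Finite) : CompactSpace X :=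
  have hcont : Continuous (CofiniteTopology.of (X := X)).symm := continuous_def.2 fun s hs =>
    CofiniteTopology.isOpen_iff.2 fun ⟨x, hx⟩ => by
      rw [← preimage_compl]
      exact (h sᶜ hs.isClosed_compl (compl_ne_univ.2 ⟨_, hx⟩)).preimage
        CofiniteTopology.of.symm.injective.injOn
  CofiniteTopology.of.symm.surjective.compactSpace hcont

theorem IsClosed.finite_of_forall_subset_isClosed {X : Type*} [TopologicalSpace X]
    [CompactSpace X] {s : Set X} (hs : IsClosed s) (h : ∀ t ⊆ s, IsClosed t) : s.Finite :=
  hs.isCompact.finite <| isDiscrete_iff_forall_mem_exists_isClosed.2 fun t ht =>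
    ⟨t, h t ht, inter_eq_left.2 ht⟩

namespace seriesTopology

variable {a : ℕ → ℝ} {s : Set ℕ}

theorem isClosed_iff : IsClosed[seriesTopology a] s ↔ Summable (s.indicator a) ∨ s = univ := by
  rw [← @isOpen_compl_iff _ _ (seriesTopology a)]
  show sᶜᶜ ∈ _ ↔ _
  rw [compl_compl]
  rfl

theorem finite_of_summable_indicator [@CompactSpace ℕ (seriesTopology a)]
    (hs : Summable (s.indicator a)) : s.Finite :=
  let _ := seriesTopology a
  (isClosed_iff.2 (.inl hs)).finite_of_forall_subset_isClosed fun _ ht =>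
    isClosed_iff.2 (.inl (hs.indicator_of_subset ht))

end seriesTopology

/-- The series topology `ℕ_{aₙ}` is compact iff `inf {aₙ} > 0`. -/
theorem compact_iff_inf_pos (a : ℕ → ℝ) (ha : ∀ n, 0 < a n) :
    @CompactSpace ℕ (seriesTopology a) ↔ 0 < ⨅ n, a n := by
  let _ := seriesTopology a
  constructor
  · intro _
    by_contra! h
    obtain ⟨s, hs, hsum⟩ := exists_infinite_summable_indicator_of_iInf_le_zero ha h
    exact hs (seriesTopology.finite_of_summable_indicator hsum)
  · intro h
    refine compactSpace_of_forall_isClosed_finite fun s hs hne => ?_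
    rcases seriesTopology.isClosed_iff.1 hs with hsum | rfl
    · exact .of_summable_indicator_of_le h
        (ciInf_le ⟨0, forall_mem_range.2 fun n => (ha n).le⟩) hsum
    · exact absurd rfl hne
end

section
/- If X is a compact connected Hausdorff space (a continuum), then every continuous map f : X → ℕ_{aₙ} is constant. -/
/-!
The fibres of `f` partition `X` into countably many disjoint closed sets, because points are
closed in `ℕ_{aₙ}` (a finite set has a summable indicator). Sierpiński's theorem then forces a
single nonempty fibre. For Sierpiński's theorem, suppose two pieces are nonempty and enumerate
the pieces as `F (e 0), F (e 1), …`. By boundary bumping, every subcontinuum meeting two pieces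
contains a subcontinuum that still meets two pieces but misses a prescribed `F (e n)`. Iterating
gives a nested sequence of nonempty compacta whose intersection misses every piece, which is
impossible since the pieces cover `X`.
-/

open Set Filter Topology

open Function

section Continuum

variable {X : Type*} [TopologicalSpace X]

theorem exists_isClopen_of_connectedComponent_subset [T2Space X] [CompactSpace X] {x : X}
    {U : Set X} (hU : IsOpen U) (h : connectedComponent x ⊆ U) :
    ∃ V, IsClopen V ∧ x ∈ V ∧ V ⊆ U := by
  have hempty : Uᶜ ∩ ⋂ s : {s : Set X // IsClopen s ∧ x ∈ s}, (s : Set X) = ∅ := by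
    rw [← connectedComponent_eq_iInter_isClopen, ← disjoint_iff_inter_eq_empty]
    exact disjoint_compl_left.mono_right h
  obtain ⟨u, hu⟩ := hU.isClosed_compl.isCompact.elim_finite_subfamily_closed _
    (fun s => s.2.1.isClosed) hempty
  refine ⟨⋂ s ∈ u, (s : Set X), isClopen_biInter_finset fun s _ => s.2.1,
    mem_iInter₂.2 fun s _ => s.2.2, fun y hy => ?_⟩
  by_contra hyU
  exact (hu ▸ ⟨hyU, hy⟩ : y ∈ (∅ : Set X))

/-- Boundary bumping: otherwise the component of `x` in `closure U` lies in `U`, hence so does a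
clopen subset of `closure U` containing `x`, and that set is then clopen in `X`. -/
theorem connectedComponentIn_closure_inter_frontier_nonempty [T2Space X] [CompactSpace X]
    [PreconnectedSpace X] {U : Set X} (hU : IsOpen U) (hUc : closure U ≠ univ) {x : X}
    (hx : x ∈ U) : (connectedComponentIn (closure U) x ∩ frontier U).Nonempty := by
  have hxK : x ∈ closure U := subset_closure hx
  have : CompactSpace (closure U) := isCompact_iff_compactSpace.mp isClosed_closure.isCompact
  by_contra hempty
  have hcU : connectedComponent (⟨x, hxK⟩ : closure U) ⊆ (↑) ⁻¹' U := by
    intro y hy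
    by_contra hyU
    refine hempty ⟨y, ?_, ?_⟩
    · rw [connectedComponentIn_eq_image hxK]; exact ⟨y, hy, rfl⟩
    · rw [hU.frontier_eq]; exact ⟨y.2, hyU⟩
  obtain ⟨V, hV, hxV, hVU⟩ :=
    exists_isClopen_of_connectedComponent_subset (hU.preimage continuous_subtype_val) hcU
  have hWclopen : IsClopen ((↑) '' V : Set X) := by
    refine ⟨isClosed_closure.isClosedMap_subtype_val V hV.isClosed, ?_⟩
    obtain ⟨W, hW, hWV⟩ := isOpen_induced_iff.1 hV.isOpen
    convert hW.inter hU using 1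
    ext y
    constructor
    · rintro ⟨y, hy, rfl⟩; exact ⟨by rwa [← hWV] at hy, hVU hy⟩
    · rintro ⟨hyW, hyU⟩; exact ⟨⟨y, subset_closure hyU⟩, by rwa [← hWV], rfl⟩
  have hWuniv := hWclopen.eq_univ ⟨x, _, hxV, rfl⟩
  exact hUc (eq_univ_of_univ_subset (hWuniv ▸ image_subset_iff.2 fun y _ => y.2))

theorem exists_isClosed_isPreconnected_disjoint_of_mem [T2Space X] [CompactSpace X]
    [PreconnectedSpace X] {A B : Set X} (hA : IsClosed A) (hB : IsClosed B)
    (hAB : Disjoint A B) (hA₀ : A.Nonempty) {x : X} (hx : x ∈ B) :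
    ∃ M, IsClosed M ∧ IsPreconnected M ∧ Disjoint M A ∧ x ∈ M ∧ (M \ B).Nonempty := by
  obtain ⟨V, U, hV, hU, hAV, hBU, hVU⟩ := normal_separation hA hB hAB
  have hUA : Disjoint (closure U) A := (hVU.symm.closure_left hV).mono_right hAV
  have hUc : closure U ≠ univ := fun h => hA₀.ne_empty (univ_disjoint.1 (h ▸ hUA))
  obtain ⟨z, hzM, hzU⟩ :=
    connectedComponentIn_closure_inter_frontier_nonempty hU hUc (hBU hx)
  rw [hU.frontier_eq] at hzU
  refine ⟨connectedComponentIn (closure U) x, ?_, isPreconnected_connectedComponentIn,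
    hUA.mono_left (connectedComponentIn_subset _ _),
    mem_connectedComponentIn (subset_closure (hBU hx)), z, hzM, fun hzB => hzU.2 (hBU hzB)⟩
  rw [connectedComponentIn_eq_image (subset_closure (hBU hx))]
  exact isClosed_closure.isClosedMap_subtype_val _ isClosed_connectedComponent

theorem IsPreconnected.exists_subset_disjoint_of_mem [T2Space X] {C A B : Set X}
    (hCc : IsCompact C) (hC : IsPreconnected C) (hA : IsClosed A) (hB : IsClosed B)
    (hAB : Disjoint A B) (hAC : (C ∩ A).Nonempty) {x : X} (hxC : x ∈ C) (hxB : x ∈ B) :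
    ∃ M ⊆ C, IsCompact M ∧ IsPreconnected M ∧ Disjoint M A ∧ x ∈ M ∧ (M \ B).Nonempty := by
  have : CompactSpace C := isCompact_iff_compactSpace.mp hCc
  have : PreconnectedSpace C := Subtype.preconnectedSpace hC
  obtain ⟨a, haC, haA⟩ := hAC
  obtain ⟨M, hM, hMp, hMA, hxM, y, hyM, hyB⟩ :=
    exists_isClosed_isPreconnected_disjoint_of_mem (hA.preimage continuous_subtype_val)
      (hB.preimage continuous_subtype_val) (hAB.preimage _) ⟨⟨a, haC⟩, haA⟩
      (x := ⟨x, hxC⟩) hxB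
  refine ⟨(↑) '' M, Subtype.coe_image_subset C M,
    hM.isCompact.image continuous_subtype_val,
    hMp.image _ continuous_subtype_val.continuousOn,
    disjoint_image_left.2 hMA, ⟨_, hxM, rfl⟩, y, ⟨y, hyM, rfl⟩, hyB⟩

section Partition

variable {ι : Type*} (F : ι → Set X)

def IsLinkingContinuum (C : Set X) : Prop :=
  IsCompact C ∧ IsPreconnected C ∧ ∃ i j, i ≠ j ∧ (C ∩ F i).Nonempty ∧ (C ∩ F j).Nonempty

variable {F}

theorem IsLinkingContinuum.exists_subset_disjoint [T2Space X] (hF : ∀ i, IsClosed (F i))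
    (hdisj : Pairwise (Disjoint on F)) (hcov : ⋃ i, F i = univ) {C : Set X}
    (hC : IsLinkingContinuum F C) (m : ι) :
    ∃ C' ⊆ C, IsLinkingContinuum F C' ∧ Disjoint C' (F m) := by
  obtain ⟨hCc, hCp, i, j, hij, hi, hj⟩ := hC
  by_cases hCm : Disjoint C (F m)
  · exact ⟨C, subset_rfl, ⟨hCc, hCp, i, j, hij, hi, hj⟩, hCm⟩
  obtain ⟨k, hkm, x, hxC, hxk⟩ : ∃ k, k ≠ m ∧ (C ∩ F k).Nonempty := by
    rcases eq_or_ne i m with rfl | him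
    · exact ⟨j, hij.symm, hj⟩
    · exact ⟨i, him, hi⟩
  obtain ⟨M, hMC, hMc, hMp, hMm, hxM, y, hyM, hyk⟩ :=
    hCp.exists_subset_disjoint_of_mem hCc (hF m) (hF k) (hdisj hkm.symm)
      (not_disjoint_iff_nonempty_inter.1 hCm) hxC hxk
  obtain ⟨l, hyl⟩ := mem_iUnion.1 (hcov ▸ mem_univ y)
  exact ⟨M, hMC, ⟨hMc, hMp, k, l, fun hkl => hyk (hkl ▸ hyl), ⟨x, hxM, hxk⟩, ⟨y, hyM, hyl⟩⟩,
    hMm⟩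

theorem eq_of_nonempty_of_pairwise_disjoint_isClosed [T2Space X] [CompactSpace X]
    [PreconnectedSpace X] [Countable ι] (hF : ∀ i, IsClosed (F i))
    (hdisj : Pairwise (Disjoint on F)) (hcov : ⋃ i, F i = univ) {i j : ι}
    (hi : (F i).Nonempty) (hj : (F j).Nonempty) : i = j := by
  by_contra hij
  have : Nonempty ι := ⟨i⟩
  obtain ⟨e, he⟩ := exists_surjective_nat ι
  have step (C : {C // IsLinkingContinuum F C}) (n : ℕ) :
      ∃ C' : {C // IsLinkingContinuum F C}, C'.1 ⊆ C.1 ∧ Disjoint C'.1 (F (e n)) :=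
    let ⟨C', hC'C, hC', hC'n⟩ := C.2.exists_subset_disjoint hF hdisj hcov (e n)
    ⟨⟨C', hC'⟩, hC'C, hC'n⟩
  choose next hnext_sub hnext_disj using step
  have huniv : IsLinkingContinuum F univ := ⟨isCompact_univ, isPreconnected_univ, i, j, hij,
    by rwa [univ_inter], by rwa [univ_inter]⟩
  let D : ℕ → {C // IsLinkingContinuum F C} := fun n =>
    Nat.rec ⟨univ, huniv⟩ (fun n C => next C n) n
  obtain ⟨z, hz⟩ := IsCompact.nonempty_iInter_of_sequence_nonempty_isCompact_isClosed
    (fun n => (D n).1) (fun n => hnext_sub (D n) n)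
    (fun n => let ⟨_, _, _, _, _, ⟨x, hx, _⟩, _⟩ := (D n).2; ⟨x, hx⟩)
    (D 0).2.1 (fun n => (D n).2.1.isClosed)
  obtain ⟨k, hzk⟩ := mem_iUnion.1 (hcov ▸ mem_univ z)
  obtain ⟨n, rfl⟩ := he k
  exact disjoint_left.1 (hnext_disj (D n) n) (mem_iInter.1 hz (n + 1)) hzk

end Partition

theorem PreconnectedSpace.constant_of_countable_t1Space [T2Space X] [CompactSpace X]
    [PreconnectedSpace X] {Y : Type*} [TopologicalSpace Y] [T1Space Y] [Countable Y]
    {f : X → Y} (hf : Continuous f) (x y : X) : f x = f y :=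
  eq_of_nonempty_of_pairwise_disjoint_isClosed (fun _ => isClosed_singleton.preimage hf)
    (pairwise_disjoint_fiber f) (iUnion_eq_univ_iff.2 fun x => ⟨f x, rfl⟩) ⟨x, rfl⟩ ⟨y, rfl⟩

end Continuum

theorem t1Space_seriesTopology (a : ℕ → ℝ) : @T1Space ℕ (seriesTopology a) := by
  let := seriesTopology a
  refine ⟨fun n => ⟨?_⟩⟩
  change Summable (({n} : Set ℕ)ᶜᶜ.indicator a) ∨ ({n} : Set ℕ)ᶜᶜ = univ
  rw [compl_compl]
  exact Or.inl (summable_of_hasFiniteSupport ((finite_singleton n).subset support_indicator_subset))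

theorem continuous_of_continuum_constant_general (a : ℕ → ℝ)
    {X : Type*} [TopologicalSpace X] [CompactSpace X] [ConnectedSpace X] [T2Space X]
    (f : X → ℕ) (hf : @Continuous X ℕ _ (seriesTopology a) f) : ∃ c, ∀ x, f x = c := by
  let := seriesTopology a
  have := t1Space_seriesTopology a
  obtain ⟨x₀⟩ : Nonempty X := inferInstance
  exact ⟨f x₀, fun x => PreconnectedSpace.constant_of_countable_t1Space hf x x₀⟩

/-- Every continuous map from a continuum (compact connected Hausdorff space)
to `ℕ_{aₙ}` is constant. -/
theorem continuous_of_continuum_constant (a : ℕ → ℝ) (ha : ∀ n, 0 < a n)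
    {X : Type*} [TopologicalSpace X] [CompactSpace X] [ConnectedSpace X] [T2Space X]
    (f : X → ℕ) (hf : @Continuous X ℕ _ (seriesTopology a) f) : ∃ c, ∀ x, f x = c :=
  continuous_of_continuum_constant_general a f hf
end

section
/- Suppose (aₙ) and (bₙ) are strictly positive, ∑ bₙ = ∞, bₙ → 0, and aₙ/bₙ → 0. Then there exists A ⊆ ℕ such that ∑_{n∈A} bₙ diverges while ∑_{n∈A} aₙ converges. -/
open Set Filter Topology

/-!
Far enough out `aₙ < 2⁻ᵏ bₙ` and `bₙ ≤ 1`; since `∑ bₙ = ∞`, stopping a run of consecutive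
indices there as soon as its `b`-mass reaches `1` gives a finite block with `b`-mass in `[1, 2]`,
hence `a`-mass at most `2 · 2⁻ᵏ`. Let `A` be the union of such blocks, the `k`-th one lying
beyond `k`. Then `∑_A aₙ ≤ ∑ₖ 2 · 2⁻ᵏ < ∞`, while `A` contains blocks of `b`-mass `≥ 1`
arbitrarily far out, so `∑_A bₙ` violates the Cauchy criterion.
-/

theorem exists_sum_Ico_mem_Icc {f : ℕ → ℝ} (hf : ∀ n, 0 ≤ f n) (hns : ¬ Summable f) {s : ℕ}
    {c : ℝ} (hc : ∀ n ≥ s, f n ≤ c) :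
    ∃ e, 1 ≤ ∑ i ∈ Finset.Ico s e, f i ∧ ∑ i ∈ Finset.Ico s e, f i ≤ 1 + c := by
  have hex : ∃ e, 1 ≤ ∑ i ∈ Finset.Ico s e, f i := by
    have hlarge := ((not_summable_iff_tendsto_nat_atTop_of_nonneg hf).1 hns).eventually_ge_atTop
      (∑ i ∈ Finset.range s, f i + 1)
    obtain ⟨e, he⟩ := (hlarge.and (eventually_ge_atTop s)).exists
    refine ⟨e, ?_⟩
    linarith [Finset.sum_range_add_sum_Ico f he.2, he.1]
  have hs : s < Nat.find hex := by
    by_contra! h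
    have := Nat.find_spec hex
    rw [Finset.Ico_eq_empty_of_le h, Finset.sum_empty] at this
    linarith
  obtain ⟨m, hm⟩ : ∃ m, Nat.find hex = m + 1 := ⟨Nat.find hex - 1, by omega⟩
  have hbefore : ∑ i ∈ Finset.Ico s m, f i < 1 := not_le.1 (Nat.find_min hex (by omega))
  refine ⟨Nat.find hex, Nat.find_spec hex, ?_⟩
  rw [hm, Finset.sum_Ico_succ_top (by omega)]
  linarith [hc m (by omega)]

theorem exists_finset_one_le_sum_and_sum_le {a b : ℕ → ℝ} (hb : ∀ n, 0 < b n)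
    (hbdiv : ¬ Summable b) (hb0 : Tendsto b atTop (𝓝 0))
    (hab : Tendsto (fun n => a n / b n) atTop (𝓝 0)) (n : ℕ) {ε : ℝ} (hε : 0 < ε) :
    ∃ t : Finset ℕ, (∀ i ∈ t, n ≤ i) ∧ 1 ≤ ∑ i ∈ t, b i ∧ ∑ i ∈ t, a i ≤ 2 * ε := by
  obtain ⟨N, hN⟩ := eventually_atTop.1 <|
    (hb0.eventually (ge_mem_nhds one_pos)).and (hab.eventually (gt_mem_nhds hε))
  obtain ⟨e, hmass_ge, hmass_le⟩ := exists_sum_Ico_mem_Icc (fun m => (hb m).le) hbdiv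
    (s := max n N) (c := 1) fun m hm => (hN m (le_of_max_le_right hm)).1
  refine ⟨Finset.Ico (max n N) e, fun i hi => le_of_max_le_left (Finset.mem_Ico.1 hi).1,
    hmass_ge, ?_⟩
  calc ∑ i ∈ Finset.Ico (max n N) e, a i
      ≤ ∑ i ∈ Finset.Ico (max n N) e, ε * b i := Finset.sum_le_sum fun i hi =>
        ((div_lt_iff₀ (hb i)).1 (hN i (le_of_max_le_right (Finset.mem_Ico.1 hi).1)).2).le
    _ = ε * ∑ i ∈ Finset.Ico (max n N) e, b i := (Finset.mul_sum _ _ _).symm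
    _ ≤ 2 * ε := by nlinarith

theorem not_summable_of_forall_exists_finset_le_sum {f : ℕ → ℝ} {ε : ℝ} (hε : 0 < ε)
    (h : ∀ n, ∃ t : Finset ℕ, (∀ i ∈ t, n ≤ i) ∧ ε ≤ ∑ i ∈ t, f i) : ¬ Summable f := by
  intro hf
  obtain ⟨s, hs⟩ := hf.vanishing (Iio_mem_nhds hε)
  obtain ⟨n, hsn⟩ := s.exists_nat_subset_range
  obtain ⟨t, ht, hεt⟩ := h n
  have hdisj : Disjoint t s := Finset.disjoint_left.2 fun i hit his =>
    (ht i hit).not_gt (Finset.mem_range.1 (hsn his))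
  exact (hs t hdisj).not_ge hεt

theorem summable_indicator_iUnion_of_sum_le {α ι : Type*} {f : α → ℝ} {g : ι → ℝ}
    {s : ι → Finset α} (hf : ∀ x, 0 ≤ f x) (hfg : ∀ i, ∑ x ∈ s i, f x ≤ g i)
    (hg : Summable g) : Summable ((⋃ i, (s i : Set α)).indicator f) := by
  rw [← summable_subtype_iff_indicator]
  have hg0 : ∀ i, 0 ≤ g i := fun i => (Finset.sum_nonneg fun x _ => hf x).trans (hfg i)
  suffices ∑' x : ⋃ i, (s i : Set α), ENNReal.ofReal (f x) ≠ ⊤ by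
    simpa [Function.comp_def, ENNReal.toReal_ofReal (hf _)] using ENNReal.summable_toReal this
  refine ne_top_of_le_ne_top (ENNReal.ofReal_ne_top (r := ∑' i, g i)) ?_
  calc ∑' x : ⋃ i, (s i : Set α), ENNReal.ofReal (f x)
      ≤ ∑' i, ∑' x : (s i : Set α), ENNReal.ofReal (f x) :=
        ENNReal.tsum_iUnion_le_tsum (fun x => ENNReal.ofReal (f x)) fun i => (s i : Set α)
    _ = ∑' i, ENNReal.ofReal (∑ x ∈ s i, f x) := by
        refine tsum_congr fun i => ?_
        rw [Finset.tsum_subtype' (s i) fun x => ENNReal.ofReal (f x),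
          ENNReal.ofReal_sum_of_nonneg fun x _ => hf x]
    _ ≤ ∑' i, ENNReal.ofReal (g i) :=
        ENNReal.tsum_le_tsum fun i => ENNReal.ofReal_le_ofReal (hfg i)
    _ = ENNReal.ofReal (∑' i, g i) := (ENNReal.ofReal_tsum_of_nonneg hg0 hg).symm

/-- If `∑ bₙ = ∞`, `bₙ → 0` and `aₙ/bₙ → 0`, then there is a set `A ⊆ ℕ` on which
`∑ bₙ` diverges while `∑ aₙ` converges. -/
theorem exists_subset_div_conv (a b : ℕ → ℝ)
    (ha : ∀ n, 0 < a n) (hb : ∀ n, 0 < b n) (hbdiv : ¬ Summable b)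
    (hb0 : Tendsto b atTop (𝓝 0)) (hab : Tendsto (fun n => a n / b n) atTop (𝓝 0)) :
    ∃ A : Set ℕ, ¬ Summable (A.indicator b) ∧ Summable (A.indicator a) := by
  choose t hfar hmass_b hmass_a using fun k : ℕ =>
    exists_finset_one_le_sum_and_sum_le hb hbdiv hb0 hab k (pow_pos (one_half_pos (α := ℝ)) k)
  refine ⟨⋃ k, (t k : Set ℕ), ?_, summable_indicator_iUnion_of_sum_le (fun n => (ha n).le)
    hmass_a (summable_geometric_two.mul_left 2)⟩
  refine not_summable_of_forall_exists_finset_le_sum one_pos fun k => ⟨t k, hfar k, ?_⟩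
  exact (hmass_b k).trans_eq <|
    Finset.sum_congr rfl fun i hi => (indicator_of_mem (mem_iUnion.2 ⟨k, hi⟩) b).symm
end
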